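/- Let n ≥ 2. Model the number of colours C_n used by the buffered online colouring algorithm with buffer size 2 on the crown graph in alternate order as follows: let Ω = (Fin (n-2) → Bool) carry the uniform probability measure (i.i.d. fair coin flips), and define C(ω) = 2 + (the number of initial coordinates of ω equal to true before the first false; this count is n-2, giving C = n, when all flips are true). Then the expected value of C equals 3 − 1/2^(n−2). -/

import Mathlib

/-!
Peeling off the first coin, `initTrues (b :: ω)` is `initTrues ω + 1` if `b` is `true` and `0`
otherwise. Hence the total `S m` of `initTrues` over all `2 ^ m` outcomes satisfies
`S (m + 1) = S m + 2 ^ m`, i.e. `S m = 2 ^ m - 1`, and averaging `2 + initTrues` gives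
`2 + (2 ^ m - 1) / 2 ^ m = 3 - 1 / 2 ^ m`.
-/

/-- The number of initial coordinates of `ω` equal to `true` before the first `false`
(equal to `m` when all coordinates are `true`). -/
def initTrues {m : ℕ} (ω : Fin m → Bool) : ℕ :=
  (Finset.univ.filter (fun i : Fin m => ∀ j ≤ i, ω j = true)).card

open MeasureTheory

lemma initTrues_cons {m : ℕ} (b : Bool) (ω : Fin m → Bool) :
    initTrues (Fin.cons b ω : Fin (m + 1) → Bool) = if b then initTrues ω + 1 else 0 := by
  simp only [initTrues, Finset.card_filter, Fin.sum_univ_succ, Fin.forall_fin_succ, Fin.cons_zero,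
    Fin.cons_succ, Fin.succ_le_succ_iff, Fin.zero_le, forall_const]
  cases b <;> simp [add_comm]

lemma sum_initTrues_add_one (m : ℕ) : (∑ ω : Fin m → Bool, initTrues ω) + 1 = 2 ^ m := by
  induction m with
  | zero => rfl
  | succ m ih =>
    rw [← (Fin.consEquiv fun _ => Bool).sum_comp, Fintype.sum_prod_type]
    simp [Fin.consEquiv, initTrues_cons, Finset.sum_add_distrib]
    omega

lemma PMF.integral_uniformOfFintype {α E : Type*} [Fintype α] [Nonempty α] [MeasurableSpace α]
    [MeasurableSingletonClass α] [NormedAddCommGroup E] [NormedSpace ℝ E] [CompleteSpace E]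
    (f : α → E) :
    ∫ a, f a ∂(PMF.uniformOfFintype α).toMeasure = (Fintype.card α : ℝ)⁻¹ • ∑ a, f a := by
  simp [PMF.integral_eq_sum, Finset.smul_sum]

theorem crown_buffer2_expected_colours_general (n : ℕ) :
    ∫ ω, ((2 + initTrues ω : ℕ) : ℝ)
        ∂((PMF.uniformOfFintype (Fin (n - 2) → Bool)).toMeasure)
      = 3 - 1 / 2 ^ (n - 2) := by
  set m := n - 2
  have hsum : ∑ ω : Fin m → Bool, ((2 + initTrues ω : ℕ) : ℝ) = 3 * 2 ^ m - 1 := by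
    have h : ((∑ ω : Fin m → Bool, initTrues ω : ℕ) : ℝ) + 1 = 2 ^ m := by
      exact_mod_cast sum_initTrues_add_one m
    push_cast at h ⊢
    simp [Finset.sum_add_distrib]
    linarith
  have hcard : (Fintype.card (Fin m → Bool) : ℝ) = 2 ^ m := by simp
  rw [PMF.integral_uniformOfFintype, hsum, hcard, smul_eq_mul]
  field_simp

/-- Theorem 4 (corrected): the expected number of colours used by the buffered online
colouring algorithm with buffer size 2 on the crown graph `C_n` in alternate order,
modelled by `C ω = 2 + initTrues ω` on the uniform space `Fin (n-2) → Bool`,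
is `3 - 1/2^(n-2)`. -/
theorem crown_buffer2_expected_colours (n : ℕ) (hn : 2 ≤ n) :
    ∫ ω, ((2 + initTrues ω : ℕ) : ℝ)
        ∂((PMF.uniformOfFintype (Fin (n - 2) → Bool)).toMeasure)
      = 3 - 1 / 2 ^ (n - 2) :=
  crown_buffer2_expected_colours_general n
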